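/- arXiv:2002.02920 — 2 statements merged into one kernel-verified Lean document; each statement's English description precedes it below -/
import Mathlib

section
/- Under the hypotheses that 5^{-(j+1)} ≤ d_H(K_α, K_β) < 3√5 · 5^{-(j+1)} for all distinct α, β ∈ {0,1}^∞ with longest common prefix of length j, the map φ taking K_α to the point of the middle-third Cantor set with ternary expansion 0.(2α_1)(2α_2)(2α_3)... is a Hölder-continuous homeomorphism with Hölder-continuous inverse from Q = {K_α : α ∈ {0,1}^∞} (with the Hausdorff metric) onto the middle-third Cantor set C_{1/3}. -/
open Pointwise

noncomputable section

/-- `ℝ^k` with the Euclidean metric. -/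
abbrev E (k : ℕ) := EuclideanSpace ℝ (Fin k)

/-- Points of `ℝ^k` all of whose coordinates are integers in `{0, …, n-1}`. -/
def digits (n k : ℕ) : Set (E k) := {x | ∀ i, ∃ m : ℕ, m < n ∧ x i = m}

/-- The unit cube `[0,1]^k`. -/
def unitCube (k : ℕ) : Set (E k) := {x | ∀ i, x i ∈ Set.Icc (0:ℝ) 1}

/-- The Hutchinson operator `A ↦ (A + D b)/5` on subsets of `ℝ³`,
for a pair of digit sets `D false = D₀`, `D true = D₁`. -/
def Ttil (D : Bool → Set (E 3)) (b : Bool) (A : Set (E 3)) : Set (E 3) :=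
  (5:ℝ)⁻¹ • (A + D b)

/-- `F_w = T_{w₁} ∘ … ∘ T_{w_k} ([0,1]³)` for a finite binary word `w`. -/
def Fword (D : Bool → Set (E 3)) (w : List Bool) : Set (E 3) :=
  w.foldr (fun b A => Ttil D b A) (unitCube 3)

/-- Length of the longest common prefix of two words. -/
def lcp : List Bool → List Bool → ℕ
  | a :: as, b :: bs => if a = b then lcp as bs + 1 else 0
  | _, _ => 0

/-- The length-`k` initial segment of an infinite binary sequence. -/
def prefixList (α : ℕ → Bool) (k : ℕ) : List Bool := List.ofFn (fun i : Fin k => α i)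

/-- `K_α = ⋂_{k≥1} T_{α₁} ∘ … ∘ T_{α_k}([0,1]³)`. -/
def Kset (D : Bool → Set (E 3)) (α : ℕ → Bool) : Set (E 3) :=
  ⋂ k : ℕ, Fword D (prefixList α (k + 1))

/-- The point of the middle-third Cantor set with ternary expansion `0.(2α₁)(2α₂)…`. -/
def cantorPoint (α : ℕ → Bool) : ℝ := ∑' i : ℕ, (if α i then 2 else 0 : ℝ) / 3 ^ (i + 1)

/-- The middle-third Cantor set `C_{1/3}`: reals whose ternary expansion uses only the
digits `0` and `2`. -/
def middleThirdCantor : Set ℝ := Set.range cantorPoint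

set_option maxHeartbeats 1000000

lemma summable_geom3 (c : ℝ) : Summable (fun i : ℕ => c / 3 ^ (i + 1)) := by
  have h : Summable (fun i : ℕ => (c / 3) * (3⁻¹ : ℝ) ^ i) :=
    (summable_geometric_of_lt_one (by norm_num) (by norm_num)).mul_left _
  exact h.congr (fun i => by rw [pow_succ, inv_pow]; ring)

lemma summable_cp (α : ℕ → Bool) :
    Summable (fun i : ℕ => (if α i then 2 else 0 : ℝ) / 3 ^ (i + 1)) :=
  Summable.of_nonneg_of_le (fun i => by split <;> positivity)
    (fun i => by gcongr; split <;> norm_num) (summable_geom3 2)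

lemma tsum_geom3 : ∑' i : ℕ, (2:ℝ) / 3 ^ (i + 1) = 1 := by
  have h : ∀ i : ℕ, (2:ℝ) / 3 ^ (i + 1) = (2/3) * (3⁻¹)^i := by
    intro i; rw [pow_succ, inv_pow]; ring
  rw [tsum_congr h, tsum_mul_left, tsum_geometric_of_lt_one (by norm_num) (by norm_num)]
  norm_num

lemma cantor_diff (α β : ℕ → Bool) (j : ℕ) (hlt : ∀ i < j, α i = β i) (hj : α j ≠ β j) :
    1 / 3 ^ (j + 1) ≤ |cantorPoint α - cantorPoint β| ∧
      |cantorPoint α - cantorPoint β| ≤ 3 / 3 ^ (j + 1) := by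
  set g : ℕ → ℝ := fun i => (if α i then 2 else 0 : ℝ) / 3 ^ (i + 1)
      - (if β i then 2 else 0 : ℝ) / 3 ^ (i + 1) with hg
  have hsg : Summable g := (summable_cp α).sub (summable_cp β)
  have hdiff : cantorPoint α - cantorPoint β = ∑' i, g i :=
    (Summable.tsum_sub (summable_cp α) (summable_cp β)).symm
  have hsplit := Summable.sum_add_tsum_nat_add (j + 1) hsg
  have hfin : ∑ i ∈ Finset.range (j + 1), g i = g j := by
    apply Finset.sum_eq_single_of_mem j (Finset.self_mem_range_succ j)
    intro i hi hne
    have : α i = β i := hlt i (lt_of_le_of_ne (Nat.lt_succ_iff.mp (Finset.mem_range.mp hi)) hne)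
    simp [hg, this]
  have hgj : |g j| = 2 / 3 ^ (j + 1) := by
    have h2 : (0:ℝ) ≤ 2 / 3 ^ (j + 1) := by positivity
    rcases Bool.eq_false_or_eq_true (α j) with h | h <;>
      rcases Bool.eq_false_or_eq_true (β j) with h' | h' <;>
      simp [hg, h, h'] at hj ⊢ <;> exact h2
  have habs : ∀ i, |g i| ≤ 2 / 3 ^ (i + 1) := by
    intro i
    have hA : ∀ γ : ℕ → Bool, 0 ≤ (if γ i then (2:ℝ) else 0) / 3 ^ (i+1) ∧
        (if γ i then (2:ℝ) else 0) / 3 ^ (i+1) ≤ 2 / 3 ^ (i+1) :=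
      fun γ => ⟨by split <;> positivity, by gcongr; split <;> norm_num⟩
    rw [hg, abs_sub_le_iff]
    exact ⟨by linarith [(hA α).2, (hA β).1], by linarith [(hA β).2, (hA α).1]⟩
  have htail : |∑' i : ℕ, g (i + (j + 1))| ≤ 1 / 3 ^ (j + 1) := by
    have hs' : Summable (fun i : ℕ => g (i + (j + 1))) := hsg.comp_injective (add_left_injective _)
    calc |∑' i : ℕ, g (i + (j + 1))| ≤ ∑' i : ℕ, |g (i + (j + 1))| := by
          simpa using norm_tsum_le_tsum_norm (f := fun i => g (i+(j+1))) (by simpa using hs'.abs)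
      _ ≤ ∑' i : ℕ, (2:ℝ) / 3 ^ (i + (j + 1) + 1) := by
          apply Summable.tsum_le_tsum (fun i => habs _) hs'.abs
          exact (summable_geom3 2).comp_injective (add_left_injective _)
      _ = 1 / 3 ^ (j + 1) := by
          have h : ∀ i : ℕ, (2:ℝ) / 3 ^ (i + (j + 1) + 1) = (1 / 3 ^ (j+1)) * ((2:ℝ)/3^(i+1)) := by
            intro i; rw [show i + (j+1) + 1 = (j+1) + (i+1) by ring, pow_add]; field_simp
          rw [tsum_congr h, tsum_mul_left, tsum_geom3, mul_one]
  have key : ∑' i, g i = g j + ∑' i : ℕ, g (i + (j + 1)) := by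
    rw [← hsplit, hfin]
  constructor
  · rw [hdiff, key]
    calc (1:ℝ) / 3 ^ (j+1) = 2 / 3 ^ (j+1) - 1 / 3 ^ (j+1) := by ring
      _ ≤ |g j| - |∑' i : ℕ, g (i + (j + 1))| := by rw [hgj]; linarith
      _ ≤ |g j + ∑' i : ℕ, g (i + (j + 1))| := by
          have := abs_sub_abs_le_abs_sub (g j) (-∑' i : ℕ, g (i + (j + 1)))
          simpa [sub_neg_eq_add] using this
  · rw [hdiff, key]
    calc |g j + ∑' i : ℕ, g (i + (j + 1))| ≤ |g j| + |∑' i : ℕ, g (i + (j + 1))| := abs_add_le _ _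
      _ ≤ 2 / 3^(j+1) + 1 / 3^(j+1) := by rw [hgj]; linarith
      _ = 3 / 3^(j+1) := by ring

lemma rpow_pow_aux {a b : ℝ} (θ : ℝ) (ha : 0 < a) (h : a ^ θ = b) (n : ℕ) :
    ((1:ℝ) / a ^ n) ^ θ = 1 / b ^ n := by
  subst h
  have key : ((a ^ n : ℝ)) ^ θ = (a ^ θ) ^ n := by
    rw [← Real.rpow_natCast a n, ← Real.rpow_mul ha.le, mul_comm, Real.rpow_mul ha.le,
      Real.rpow_natCast]
  rw [Real.div_rpow zero_le_one (by positivity), Real.one_rpow, key]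

lemma five_rpow : (5:ℝ) ^ (Real.log 3 / Real.log 5) = 3 := by
  rw [Real.rpow_def_of_pos (by norm_num), mul_div_cancel₀ _ (Real.log_ne_zero_of_pos_of_ne_one
    (by norm_num) (by norm_num)), Real.exp_log (by norm_num)]

lemma three_rpow : (3:ℝ) ^ (Real.log 5 / Real.log 3) = 5 := by
  rw [Real.rpow_def_of_pos (by norm_num), mul_div_cancel₀ _ (Real.log_ne_zero_of_pos_of_ne_one
    (by norm_num) (by norm_num)), Real.exp_log (by norm_num)]

/-- Under the two-sided estimate
`5^{-(j+1)} ≤ d_H(K_α, K_β) < 3√5·5^{-(j+1)}` (`j` the length of the longest common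
prefix of `α ≠ β`), the map `φ : K_α ↦ 0.(2α₁)(2α₂)…` is a well-defined bijection from
`Q = {K_α}` onto the middle-third Cantor set, Hölder with exponent `log 3 / log 5`,
with inverse Hölder with exponent `log 5 / log 3`. -/
theorem cantor_parametrization (D : Bool → Set (E 3))
    (hfin : ∀ b, (D b).Finite) (hne : ∀ b, (D b).Nonempty)
    (hsub : ∀ b, D b ⊆ digits 5 3)
    (hest : ∀ α β : ℕ → Bool, ∀ j : ℕ, (∀ i < j, α i = β i) → α j ≠ β j →
      1 / 5 ^ (j + 1) ≤ Metric.hausdorffDist (Kset D α) (Kset D β) ∧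
        Metric.hausdorffDist (Kset D α) (Kset D β) < 3 * Real.sqrt 5 / 5 ^ (j + 1)) :
    ∃ φ : Set (E 3) → ℝ,
      (∀ α : ℕ → Bool, φ (Kset D α) = cantorPoint α) ∧
      Set.InjOn φ (Set.range (Kset D)) ∧
      φ '' Set.range (Kset D) = middleThirdCantor ∧
      (∃ C₁ > (0:ℝ), ∀ α β : ℕ → Bool,
        |φ (Kset D α) - φ (Kset D β)| ≤
          C₁ * Metric.hausdorffDist (Kset D α) (Kset D β) ^ (Real.log 3 / Real.log 5)) ∧
      (∃ C₂ > (0:ℝ), ∀ α β : ℕ → Bool,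
        Metric.hausdorffDist (Kset D α) (Kset D β) ≤
          C₂ * |φ (Kset D α) - φ (Kset D β)| ^ (Real.log 5 / Real.log 3)) := by
  classical
  set θ := Real.log 3 / Real.log 5 with hθdef
  set η := Real.log 5 / Real.log 3 with hηdef
  have hθpos : 0 < θ := div_pos (Real.log_pos (by norm_num)) (Real.log_pos (by norm_num))
  have hηpos : 0 < η := div_pos (Real.log_pos (by norm_num)) (Real.log_pos (by norm_num))
  -- injectivity of `Kset`
  have hKinj : Function.Injective (Kset D) := by
    intro α β h
    by_contra hab
    have hex : ∃ j, α j ≠ β j := Function.ne_iff.mp hab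
    have hj := Nat.find_spec hex
    have hlt : ∀ i < Nat.find hex, α i = β i := fun i hi => not_not.mp (Nat.find_min hex hi)
    have h1 := (hest α β _ hlt hj).1
    rw [h, Metric.hausdorffDist_self_zero] at h1
    have : (0:ℝ) < 1 / 5 ^ (Nat.find hex + 1) := by positivity
    linarith
  refine ⟨Function.extend (Kset D) cantorPoint 0, fun α => hKinj.extend_apply _ _ _, ?_, ?_, ?_, ?_⟩
  · rintro _ ⟨α, rfl⟩ _ ⟨β, rfl⟩ h
    rw [hKinj.extend_apply, hKinj.extend_apply] at h
    by_contra hab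
    have hab' : α ≠ β := fun hc => hab (congrArg _ hc)
    have hex : ∃ j, α j ≠ β j := Function.ne_iff.mp hab'
    have hj := Nat.find_spec hex
    have hlt : ∀ i < Nat.find hex, α i = β i := fun i hi => not_not.mp (Nat.find_min hex hi)
    have h1 := (cantor_diff α β _ hlt hj).1
    rw [h, sub_self, abs_zero] at h1
    have : (0:ℝ) < 1 / 3 ^ (Nat.find hex + 1) := by positivity
    linarith
  · ext y
    constructor
    · rintro ⟨_, ⟨α, rfl⟩, rfl⟩
      exact ⟨α, (hKinj.extend_apply _ _ _).symm⟩
    · rintro ⟨α, rfl⟩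
      exact ⟨Kset D α, ⟨α, rfl⟩, hKinj.extend_apply _ _ _⟩
  · refine ⟨3, by norm_num, fun α β => ?_⟩
    rw [hKinj.extend_apply, hKinj.extend_apply]
    by_cases hab : α = β
    · subst hab
      rw [sub_self, abs_zero, Metric.hausdorffDist_self_zero, Real.zero_rpow hθpos.ne', mul_zero]
    · have hex : ∃ j, α j ≠ β j := Function.ne_iff.mp hab
      have hj := Nat.find_spec hex
      have hlt : ∀ i < Nat.find hex, α i = β i := fun i hi => not_not.mp (Nat.find_min hex hi)
      set j := Nat.find hex
      have h1 := (hest α β _ hlt hj).1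
      have h2 := (cantor_diff α β _ hlt hj).2
      calc |cantorPoint α - cantorPoint β| ≤ 3 / 3 ^ (j + 1) := h2
        _ = 3 * ((1 / 5 ^ (j+1) : ℝ) ^ θ) := by
            rw [rpow_pow_aux θ (by norm_num) five_rpow]; ring
        _ ≤ 3 * Metric.hausdorffDist (Kset D α) (Kset D β) ^ θ := by
            gcongr
  · refine ⟨3 * Real.sqrt 5, by positivity, fun α β => ?_⟩
    rw [hKinj.extend_apply, hKinj.extend_apply]
    by_cases hab : α = β
    · subst hab
      rw [sub_self, abs_zero, Metric.hausdorffDist_self_zero, Real.zero_rpow hηpos.ne', mul_zero]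
    · have hex : ∃ j, α j ≠ β j := Function.ne_iff.mp hab
      have hj := Nat.find_spec hex
      have hlt : ∀ i < Nat.find hex, α i = β i := fun i hi => not_not.mp (Nat.find_min hex hi)
      set j := Nat.find hex
      have h1 := (hest α β _ hlt hj).2
      have h2 := (cantor_diff α β _ hlt hj).1
      calc Metric.hausdorffDist (Kset D α) (Kset D β)
          ≤ 3 * Real.sqrt 5 / 5 ^ (j + 1) := h1.le
        _ = 3 * Real.sqrt 5 * ((1 / 3 ^ (j+1) : ℝ) ^ η) := by
            rw [rpow_pow_aux η (by norm_num) three_rpow]; ring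
        _ ≤ 3 * Real.sqrt 5 * |cantorPoint α - cantorPoint β| ^ η := by
            gcongr
end
end

section
/- The set Q = {K_α : α ∈ {0,1}^∞} is a self-similar subset of the hyperspace C(ℝ^3): Q = T̃_0(Q) ∪ T̃_1(Q), where T̃_i : C(ℝ^3) → C(ℝ^3) is the map A ↦ (A + D_i)/5, and T̃_0, T̃_1 restricted to Q are injective contractions with Lipschitz constant 1/5. -/
open Pointwise

noncomputable section

/-!
Since the digit sets are finite, `A ↦ (A + D b)/5` commutes with decreasing intersections
(pigeonhole on the digit used at each stage), so `T̃_b (K_α) = K_{bα}` and `Q` is the union of its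
two images. Translating both sets by the same set does not increase the Hausdorff distance and
scaling by `1/5` multiplies it by `1/5`. For injectivity, `A + D = B + D` forces `A = B` when
`A, B ⊆ [0,1]³` and `D` is a finite set of integer points: for `x ∈ A` take `d ∈ D` maximising
`v ↦ ∑ σᵢ vᵢ`, where `σᵢ` is `1`, `-1` or `0` according as `xᵢ = 1`, `xᵢ = 0` or neither; writing
`x + d = y + d'` with `y ∈ B`, every `xᵢ - yᵢ` is an integer in `[-1, 1]`, so
`∑ σᵢ (d'ᵢ - dᵢ) = ∑ |xᵢ - yᵢ|`, while maximality of `d` makes it `≤ 0`; hence `x = y`.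
-/

open Metric

section Pointwise

variable {α : Type*}

theorem Set.smul_set_iInter₀ {M : Type*} [GroupWithZero M] [MulAction M α] {ι : Sort*} {a : M}
    (ha : a ≠ 0) (t : ι → Set α) : a • ⋂ i, t i = ⋂ i, a • t i :=
  Set.smul_set_iInter (Units.mk0 a ha) t

theorem Set.iInter_add_of_antitone [AddGroup α] {S : ℕ → Set α} (hS : Antitone S) {T : Set α}
    (hT : T.Finite) : (⋂ k, S k) + T = ⋂ k, S k + T := by
  refine (Set.iInter_add_subset S T).antisymm fun x hx => ?_
  have hshift : ∀ k, ∃ d : T, x - d ∈ S k := fun k => by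
    obtain ⟨s, hs, d, hd, rfl⟩ := Set.mem_iInter.mp hx k
    exact ⟨⟨d, hd⟩, by simpa using hs⟩
  choose f hf using hshift
  have : Finite T := hT.to_subtype
  -- pigeonhole: one translate `d` works for infinitely many, hence (by antitonicity) all, `k`
  obtain ⟨d, hd⟩ := Finite.exists_infinite_fiber f
  have hmem : x - d ∈ ⋂ k, S k := Set.mem_iInter.mpr fun k => by
    obtain ⟨k', hk', hkk'⟩ := (Set.infinite_coe_iff.mp hd).exists_gt k
    exact hS hkk'.le (hk' ▸ hf k')
  simpa using Set.add_mem_add hmem d.2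

end Pointwise

section Hausdorff

variable {𝕜 F : Type*} [SeminormedAddCommGroup F]

theorem Metric.infEDist_add_le_of_mem {x d : F} {t u : Set F} (hd : d ∈ u) :
    infEDist (x + d) (t + u) ≤ infEDist x t :=
  calc infEDist (x + d) (t + u) ≤ infEDist (x + d) (t + {d}) :=
        infEDist_anti (Set.add_subset_add_left (Set.singleton_subset_iff.2 hd))
    _ = infEDist x t := by rw [Set.add_singleton, infEDist_image (isometry_add_right d)]

theorem Metric.hausdorffEDist_add_right_le (s t u : Set F) :
    hausdorffEDist (s + u) (t + u) ≤ hausdorffEDist s t := by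
  refine hausdorffEDist_le_of_infEDist (fun x hx => ?_) (fun x hx => ?_) <;>
    obtain ⟨a, ha, d, hd, rfl⟩ := hx <;> refine (infEDist_add_le_of_mem hd).trans ?_
  · exact infEDist_le_hausdorffEDist_of_mem ha
  · exact hausdorffEDist_comm (s := s) ▸ infEDist_le_hausdorffEDist_of_mem ha

variable [NormedDivisionRing 𝕜] [Module 𝕜 F] [NormSMulClass 𝕜 F]

theorem Metric.hausdorffEDist_smul₀_le {c : 𝕜} (hc : c ≠ 0) (s t : Set F) :
    hausdorffEDist (c • s) (c • t) ≤ ‖c‖₊ • hausdorffEDist s t := by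
  refine hausdorffEDist_le_of_infEDist (fun x hx => ?_) (fun x hx => ?_)
  all_goals
    obtain ⟨a, ha, rfl⟩ := hx
    rw [infEDist_smul₀ hc]
    gcongr
  · exact infEDist_le_hausdorffEDist_of_mem ha
  · exact hausdorffEDist_comm (s := s) ▸ infEDist_le_hausdorffEDist_of_mem ha

theorem Metric.hausdorffDist_smul_add_le {c : 𝕜} (hc : c ≠ 0) {s t : Set F}
    (hs : Bornology.IsBounded s) (ht : Bornology.IsBounded t) (u : Set F) :
    hausdorffDist (c • (s + u)) (c • (t + u)) ≤ ‖c‖ * hausdorffDist s t := by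
  rcases s.eq_empty_or_nonempty with rfl | hs_ne
  · simp
  rcases t.eq_empty_or_nonempty with rfl | ht_ne
  · simp
  have hfin := hausdorffEDist_ne_top_of_nonempty_of_bounded hs_ne ht_ne hs ht
  calc hausdorffDist (c • (s + u)) (c • (t + u))
      ≤ (‖c‖₊ • hausdorffEDist s t).toReal := by
        refine ENNReal.toReal_mono (ENNReal.mul_ne_top ENNReal.coe_ne_top hfin) ?_
        grw [hausdorffEDist_smul₀_le hc, hausdorffEDist_add_right_le]
    _ = ‖c‖ * hausdorffDist s t := by simp [hausdorffDist, ENNReal.smul_def]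

end Hausdorff

def cornerSign (t : ℝ) : ℝ := if t = 1 then 1 else if t = 0 then -1 else 0

theorem cornerSign_mul_eq_abs {x y : ℝ} (hx : x ∈ Set.Icc (0 : ℝ) 1) (hy : y ∈ Set.Icc (0 : ℝ) 1)
    {n : ℤ} (hn : x - y = n) : cornerSign x * (x - y) = |x - y| := by
  obtain ⟨hx0, hx1⟩ := hx
  obtain ⟨hy0, hy1⟩ := hy
  have hn_cases : n = -1 ∨ n = 0 ∨ n = 1 := by
    have : (-1 : ℝ) < n + 1 ∧ (n : ℝ) - 1 < 1 := by constructor <;> linarith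
    have : -1 < n + 1 ∧ n - 1 < 1 := by exact_mod_cast this
    omega
  rcases hn_cases with rfl | rfl | rfl
  · have hx : x = 0 := by push_cast at hn; linarith
    rw [hn, hx]
    norm_num [cornerSign]
  · simp [hn]
  · have hx : x = 1 := by push_cast at hn; linarith
    rw [hn, hx]
    norm_num [cornerSign]

theorem sub_apply_eq_intCast_of_mem_digits {n k : ℕ} {d d' : E k} (hd : d ∈ digits n k)
    (hd' : d' ∈ digits n k) (i : Fin k) : ∃ m : ℤ, d i - d' i = m := by
  obtain ⟨a, -, ha⟩ := hd i
  obtain ⟨b, -, hb⟩ := hd' i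
  exact ⟨a - b, by rw [ha, hb]; push_cast; rfl⟩

theorem subset_of_add_eq_add {n k : ℕ} {T A B : Set (E k)} (hT : T.Finite) (hT_ne : T.Nonempty)
    (hT_sub : T ⊆ digits n k) (hA : A ⊆ unitCube k) (hB : B ⊆ unitCube k) (h : A + T = B + T) :
    A ⊆ B := by
  intro x hx
  let φ : E k → ℝ := fun v => ∑ i, cornerSign (x i) * v i
  obtain ⟨d, hd, hd_max⟩ := T.exists_max_image φ hT hT_ne
  obtain ⟨y, hy, d', hd', hsum⟩ : x + d ∈ B + T := h ▸ Set.add_mem_add hx hd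
  have hxy : ∀ i, x i - y i = d' i - d i := fun i => by
    have := congrArg (· i) hsum
    simp only [PiLp.add_apply] at this
    linarith
  have hφ : φ d' - φ d = ∑ i, |x i - y i| := by
    simp only [φ, ← Finset.sum_sub_distrib, ← mul_sub]
    refine Finset.sum_congr rfl fun i _ => ?_
    obtain ⟨m, hm⟩ := sub_apply_eq_intCast_of_mem_digits (hT_sub hd') (hT_sub hd) i
    rw [← hxy i] at hm ⊢
    exact cornerSign_mul_eq_abs (hA hx i) (hB hy i) hm
  have hzero : ∑ i, |x i - y i| = 0 :=
    le_antisymm (by linarith [hd_max d' hd']) (Finset.sum_nonneg fun i _ => abs_nonneg _)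
  have hxy_eq : x = y := by
    ext i
    have := (Finset.sum_eq_zero_iff_of_nonneg fun i _ => abs_nonneg (x i - y i)).mp hzero i
      (Finset.mem_univ i)
    linarith [abs_eq_zero.mp this]
  exact hxy_eq ▸ hy

theorem isCompact_unitCube (k : ℕ) : IsCompact (unitCube k) := by
  have : unitCube k = (EuclideanSpace.equiv (Fin k) ℝ) ⁻¹' Set.Icc 0 1 := by
    ext x
    simp [unitCube, Set.mem_Icc, Pi.le_def, forall_and]
  rw [this]
  exact (EuclideanSpace.equiv (Fin k) ℝ).toHomeomorph.isCompact_preimage.mpr isCompact_Icc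

section Ttil

variable {D : Bool → Set (E 3)}

theorem Ttil_mono (b : Bool) : Monotone (Ttil D b) :=
  fun _ _ h => Set.smul_set_mono (Set.add_subset_add_right h)

theorem Ttil_unitCube_subset {b : Bool} (hsub : D b ⊆ digits 5 3) :
    Ttil D b (unitCube 3) ⊆ unitCube 3 := by
  rintro _ ⟨_, ⟨a, ha, d, hd, rfl⟩, rfl⟩ i
  obtain ⟨m, hm, hdi⟩ := hsub hd i
  obtain ⟨ha0, ha1⟩ := ha i
  have hm4 : (m : ℝ) ≤ 4 := by exact_mod_cast Nat.lt_succ_iff.mp hm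
  simp only [PiLp.smul_apply, PiLp.add_apply, smul_eq_mul, hdi, Set.mem_Icc]
  constructor <;> nlinarith

theorem Ttil_iInter (hfin : ∀ b, (D b).Finite) {S : ℕ → Set (E 3)} (hS : Antitone S) (b : Bool) :
    Ttil D b (⋂ k, S k) = ⋂ k, Ttil D b (S k) := by
  rw [Ttil, Set.iInter_add_of_antitone hS (hfin b), Set.smul_set_iInter₀ (by norm_num)]
  rfl

theorem Fword_append_singleton_subset (hsub : ∀ b, D b ⊆ digits 5 3) (w : List Bool) (b : Bool) :
    Fword D (w ++ [b]) ⊆ Fword D w := by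
  induction w with
  | nil => exact Ttil_unitCube_subset (hsub b)
  | cons a w ih => exact Ttil_mono a ih

theorem prefixList_succ (α : ℕ → Bool) (k : ℕ) :
    prefixList α (k + 1) = prefixList α k ++ [α k] := by
  rw [prefixList, List.ofFn_succ_last]
  rfl

def consSeq {β : Type*} (b : β) (α : ℕ → β) : ℕ → β
  | 0 => b
  | n + 1 => α n

theorem consSeq_head_tail {β : Type*} (α : ℕ → β) : consSeq (α 0) (fun n => α (n + 1)) = α := by
  funext n
  cases n <;> rfl

theorem prefixList_consSeq (b : Bool) (α : ℕ → Bool) (k : ℕ) :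
    prefixList (consSeq b α) (k + 1) = b :: prefixList α k := by
  simp only [prefixList, List.ofFn_succ]
  rfl

theorem antitone_Fword_prefixList (hsub : ∀ b, D b ⊆ digits 5 3) (α : ℕ → Bool) :
    Antitone fun k => Fword D (prefixList α k) :=
  antitone_nat_of_succ_le fun k => by
    simpa only [prefixList_succ] using Fword_append_singleton_subset hsub _ _

theorem Kset_subset_unitCube (hsub : ∀ b, D b ⊆ digits 5 3) (α : ℕ → Bool) :
    Kset D α ⊆ unitCube 3 :=
  (Set.iInter_subset _ 0).trans (antitone_Fword_prefixList hsub α (Nat.zero_le 1))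

theorem Ttil_Kset (hfin : ∀ b, (D b).Finite) (hsub : ∀ b, D b ⊆ digits 5 3) (b : Bool)
    (α : ℕ → Bool) : Ttil D b (Kset D α) = Kset D (consSeq b α) := by
  have hanti := antitone_Fword_prefixList hsub (consSeq b α)
  calc Ttil D b (Kset D α)
      = ⋂ k, Fword D (prefixList (consSeq b α) (k + 2)) := by
        rw [Kset, Ttil_iInter hfin (S := fun k => Fword D (prefixList α (k + 1)))
          (fun _ _ h => antitone_Fword_prefixList hsub α (Nat.succ_le_succ h)) b]
        simp only [prefixList_consSeq]
        rfl
    _ = Kset D (consSeq b α) := (hanti.iInf_nat_add 2).trans (hanti.iInf_nat_add 1).symm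

theorem range_Kset_eq_union (hfin : ∀ b, (D b).Finite) (hsub : ∀ b, D b ⊆ digits 5 3) :
    Set.range (Kset D) =
      Ttil D false '' Set.range (Kset D) ∪ Ttil D true '' Set.range (Kset D) := by
  refine Set.Subset.antisymm ?_ ?_
  · rintro _ ⟨α, rfl⟩
    have hsplit : Kset D α = Ttil D (α 0) (Kset D (fun n => α (n + 1))) := by
      rw [Ttil_Kset hfin hsub, consSeq_head_tail]
    have hmem : Kset D α ∈ Ttil D (α 0) '' Set.range (Kset D) :=
      ⟨_, Set.mem_range_self _, hsplit.symm⟩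
    generalize α 0 = b at hmem
    cases b
    exacts [Or.inl hmem, Or.inr hmem]
  · rintro _ (⟨_, ⟨α, rfl⟩, rfl⟩ | ⟨_, ⟨α, rfl⟩, rfl⟩) <;>
      exact ⟨_, (Ttil_Kset hfin hsub _ α).symm⟩

theorem injOn_Ttil_subsets_unitCube (hfin : ∀ b, (D b).Finite) (hne : ∀ b, (D b).Nonempty)
    (hsub : ∀ b, D b ⊆ digits 5 3) (b : Bool) :
    Set.InjOn (Ttil D b) {A | A ⊆ unitCube 3} := by
  intro A hA B hB h
  have h5 : (5:ℝ)⁻¹ ≠ 0 := by norm_num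
  have hsum : A + D b = B + D b :=
    ((Set.smul_set_subset_smul_set_iff₀ h5).1 h.le).antisymm
      ((Set.smul_set_subset_smul_set_iff₀ h5).1 h.ge)
  exact (subset_of_add_eq_add (hfin b) (hne b) (hsub b) hA hB hsum).antisymm
    (subset_of_add_eq_add (hfin b) (hne b) (hsub b) hB hA hsum.symm)

theorem hausdorffDist_Ttil_le {A B : Set (E 3)} (hA : A ⊆ unitCube 3) (hB : B ⊆ unitCube 3)
    (b : Bool) :
    hausdorffDist (Ttil D b A) (Ttil D b B) ≤ (5:ℝ)⁻¹ * hausdorffDist A B := by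
  have hbdd := (isCompact_unitCube 3).isBounded
  refine (hausdorffDist_smul_add_le (by norm_num : (5:ℝ)⁻¹ ≠ 0) (hbdd.subset hA)
    (hbdd.subset hB) (D b)).trans_eq ?_
  norm_num

end Ttil

theorem Q_self_similar_general (D : Bool → Set (E 3))
    (hfin : ∀ b, (D b).Finite) (hne : ∀ b, (D b).Nonempty)
    (hsub : ∀ b, D b ⊆ digits 5 3) :
    Set.range (Kset D) =
        Ttil D false '' Set.range (Kset D) ∪ Ttil D true '' Set.range (Kset D) ∧
      (∀ b : Bool, Set.InjOn (Ttil D b) (Set.range (Kset D))) ∧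
      (∀ b : Bool, ∀ A ∈ Set.range (Kset D), ∀ B ∈ Set.range (Kset D),
        Metric.hausdorffDist (Ttil D b A) (Ttil D b B) ≤
          (5:ℝ)⁻¹ * Metric.hausdorffDist A B) := by
  have hQ_cube : Set.range (Kset D) ⊆ {A | A ⊆ unitCube 3} := by
    rintro _ ⟨α, rfl⟩
    exact Kset_subset_unitCube hsub α
  refine ⟨range_Kset_eq_union hfin hsub,
    fun b => (injOn_Ttil_subsets_unitCube hfin hne hsub b).mono hQ_cube, ?_⟩
  intro b A hA B hB
  exact hausdorffDist_Ttil_le (hQ_cube hA) (hQ_cube hB) b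

/-- `Q = {K_α}` is a self-similar subset of the hyperspace:
`Q = T̃₀(Q) ∪ T̃₁(Q)`, and `T̃₀, T̃₁` restricted to `Q` are injective contractions with
Lipschitz constant `1/5` for the Hausdorff distance. -/
theorem Q_self_similar (D : Bool → Set (E 3))
    (hfin : ∀ b, (D b).Finite) (hne : ∀ b, (D b).Nonempty)
    (hsub : ∀ b, D b ⊆ digits 5 3) (hdisj : Disjoint (D false) (D true))
    (hsep : ∀ x ∈ D false + unitCube 3, ∀ y ∈ D true + unitCube 3, 1 ≤ dist x y) :
    Set.range (Kset D) =
        Ttil D false '' Set.range (Kset D) ∪ Ttil D true '' Set.range (Kset D) ∧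
      (∀ b : Bool, Set.InjOn (Ttil D b) (Set.range (Kset D))) ∧
      (∀ b : Bool, ∀ A ∈ Set.range (Kset D), ∀ B ∈ Set.range (Kset D),
        Metric.hausdorffDist (Ttil D b A) (Ttil D b B) ≤
          (5:ℝ)⁻¹ * Metric.hausdorffDist A B) :=
  Q_self_similar_general D hfin hne hsub
end
end
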